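/- arXiv:2408.00543 — 3 statements merged into one kernel-verified Lean document; each statement's English description precedes it below -/
import Mathlib

section
/- For every x ∈ ℝⁿ there exists λ ∈ Δ_m minimizing λ ↦ ½‖Σ_{i=1}^m λ_i ∇f_i(x)‖² over Δ_m such that d_SD(x) = −Σ_{i=1}^m λ_i ∇f_i(x) and θ_SD(x) = −½‖d_SD(x)‖²; moreover ⟨∇f_i(x), d_SD(x)⟩ ≤ −‖d_SD(x)‖² for every i = 1, …, m. -/
open RealInnerProductSpace

noncomputable section

abbrev E (n : ℕ) := EuclideanSpace ℝ (Fin n)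

def maxD {n m : ℕ} [NeZero m] (f : Fin m → E n → ℝ) (x d : E n) : ℝ :=
  Finset.univ.sup' Finset.univ_nonempty (fun i => ⟪gradient (f i) x, d⟫)

/-!
Let `u` be the minimal-norm point of the convex hull of the gradients, `u = ∑ λᵢ ∇fᵢ(x)` with
`λ ∈ Δ_m` (it exists by compactness of the simplex). The projection inequality for this
minimum-norm point gives `‖u‖² ≤ ⟪u, ∇fᵢ(x)⟫` for every `i`, so `max_i ⟪∇fᵢ(x), -u⟫ ≤ -‖u‖²`.
On the other hand `max_i ⟪∇fᵢ(x), d⟫ ≥ ⟪u, d⟫` for every `d`, whence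
`max_i ⟪∇fᵢ(x), d⟫ + ‖d‖²/2 ≥ ‖d + u‖²/2 - ‖u‖²/2 ≥ -‖u‖²/2`, with the lower bound attained
exactly at `d = -u`.
-/

section

variable {F : Type*} [NormedAddCommGroup F] [InnerProductSpace ℝ F]

theorem sq_norm_le_inner_of_isMinOn_norm {K : Set F} (hK : Convex ℝ K) {u w : F} (hu : u ∈ K)
    (hmin : IsMinOn (‖·‖) K u) (hw : w ∈ K) : ‖u‖ ^ 2 ≤ ⟪u, w⟫ := by
  have : Nonempty K := ⟨⟨u, hu⟩⟩
  have hinf : ‖(0 : F) - u‖ = ⨅ v : K, ‖(0 : F) - v‖ := by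
    simp only [zero_sub, norm_neg]
    have hbdd : BddBelow (Set.range fun v : K => ‖(v : F)‖) :=
      ⟨0, by rintro _ ⟨v, rfl⟩; positivity⟩
    exact le_antisymm (le_ciInf fun v => hmin v.2) (ciInf_le hbdd ⟨u, hu⟩)
  have := (norm_eq_iInf_iff_real_inner_le_zero hK hu).1 hinf w hw
  rw [zero_sub, inner_neg_left, inner_sub_right, real_inner_self_eq_norm_sq] at this
  linarith

variable {ι : Type*} [Fintype ι] (g : ι → F)

def maxInner [Nonempty ι] (d : F) : ℝ :=
  Finset.univ.sup' Finset.univ_nonempty fun i => ⟪g i, d⟫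

theorem exists_isMinOn_norm_sum_smul [Nonempty ι] :
    ∃ lam ∈ stdSimplex ℝ ι, IsMinOn (fun μ => ‖∑ i, μ i • g i‖) (stdSimplex ℝ ι) lam := by
  classical
  exact (isCompact_stdSimplex ℝ ι).exists_isMinOn
    ⟨_, single_mem_stdSimplex ℝ (Classical.arbitrary ι)⟩ (by fun_prop)

theorem sq_norm_sum_smul_le_inner_of_isMinOn {lam : ι → ℝ}
    (hlam : lam ∈ stdSimplex ℝ ι)
    (hmin : IsMinOn (fun μ => ‖∑ i, μ i • g i‖) (stdSimplex ℝ ι) lam) (i : ι) :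
    ‖∑ j, lam j • g j‖ ^ 2 ≤ ⟪∑ j, lam j • g j, g i⟫ := by
  classical
  have hK : Convex ℝ ((fun μ : ι → ℝ => ∑ j, μ j • g j) '' stdSimplex ℝ ι) :=
    (convex_stdSimplex ℝ ι).is_linear_image (Fintype.linearCombination ℝ g).isLinear
  refine sq_norm_le_inner_of_isMinOn_norm hK ⟨lam, hlam, rfl⟩ ?_
    ⟨Pi.single i 1, single_mem_stdSimplex ℝ i, by simp [Pi.single_apply]⟩
  rintro _ ⟨μ, hμ, rfl⟩
  exact hmin hμ

variable [Nonempty ι]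

theorem inner_sum_smul_le_maxInner {lam : ι → ℝ} (hlam : lam ∈ stdSimplex ℝ ι) (d : F) :
    ⟪∑ i, lam i • g i, d⟫ ≤ maxInner g d :=
  calc ⟪∑ i, lam i • g i, d⟫ = ∑ i, lam i * ⟪g i, d⟫ := by
        simp only [sum_inner, real_inner_smul_left]
    _ ≤ ∑ i, lam i * maxInner g d :=
        Finset.sum_le_sum fun i _ =>
          mul_le_mul_of_nonneg_left (Finset.le_sup' (fun i => ⟪g i, d⟫) (Finset.mem_univ i))
            (hlam.1 i)
    _ = maxInner g d := by rw [← Finset.sum_mul, hlam.2, one_mul]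

theorem maxInner_neg_le {u : F} (hu : ∀ i, ‖u‖ ^ 2 ≤ ⟪u, g i⟫) : maxInner g (-u) ≤ -‖u‖ ^ 2 :=
  Finset.sup'_le _ _ fun i _ => by
    rw [inner_neg_right, real_inner_comm]
    linarith [hu i]

variable {g} {lam : ι → ℝ}

theorem maxInner_neg_sum_smul_add_half_sq_norm (hlam : lam ∈ stdSimplex ℝ ι)
    (hkey : ∀ i, ‖∑ j, lam j • g j‖ ^ 2 ≤ ⟪∑ j, lam j • g j, g i⟫) :
    maxInner g (-∑ j, lam j • g j) + ‖∑ j, lam j • g j‖ ^ 2 / 2 = -‖∑ j, lam j • g j‖ ^ 2 / 2 := by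
  have hlow := inner_sum_smul_le_maxInner g hlam (-∑ j, lam j • g j)
  rw [inner_neg_right, real_inner_self_eq_norm_sq] at hlow
  linarith [maxInner_neg_le g hkey]

theorem eq_neg_sum_smul_of_maxInner_add_le (hlam : lam ∈ stdSimplex ℝ ι) {d : F}
    (hd : maxInner g d + ‖d‖ ^ 2 / 2 ≤ -‖∑ j, lam j • g j‖ ^ 2 / 2) :
    d = -∑ j, lam j • g j := by
  set u := ∑ j, lam j • g j
  have hlow := inner_sum_smul_le_maxInner g hlam d
  have hsq : ‖d + u‖ ^ 2 = ‖d‖ ^ 2 + 2 * ⟪u, d⟫ + ‖u‖ ^ 2 := by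
    rw [norm_add_sq_real, real_inner_comm]
  have : ‖d + u‖ ^ 2 ≤ 0 := by linarith
  exact eq_neg_of_add_eq_zero_left (by simpa using this)

end

theorem stmt3_general {n m : ℕ} [NeZero m] (f : Fin m → E n → ℝ)
    (x dsd : E n) (θ : ℝ)
    (hmin : ∀ d : E n, maxD f x dsd + ‖dsd‖ ^ 2 / 2 ≤ maxD f x d + ‖d‖ ^ 2 / 2)
    (hθ : θ = maxD f x dsd + ‖dsd‖ ^ 2 / 2) :
    ∃ lam ∈ stdSimplex ℝ (Fin m),
      (∀ μ ∈ stdSimplex ℝ (Fin m),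
        ‖∑ i, lam i • gradient (f i) x‖ ^ 2 / 2 ≤ ‖∑ i, μ i • gradient (f i) x‖ ^ 2 / 2) ∧
      dsd = -∑ i, lam i • gradient (f i) x ∧
      θ = -‖dsd‖ ^ 2 / 2 ∧
      ∀ i, ⟪gradient (f i) x, dsd⟫ ≤ -‖dsd‖ ^ 2 := by
  set g : Fin m → E n := fun i => gradient (f i) x
  obtain ⟨lam, hlam, hlam_min⟩ := exists_isMinOn_norm_sum_smul g
  have hkey := sq_norm_sum_smul_le_inner_of_isMinOn g hlam hlam_min
  have hval := maxInner_neg_sum_smul_add_half_sq_norm hlam hkey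
  obtain rfl : dsd = -∑ j, lam j • g j :=
    eq_neg_sum_smul_of_maxInner_add_le hlam ((hmin _).trans (by rw [norm_neg]; exact hval.le))
  refine ⟨lam, hlam, fun μ hμ => by gcongr; exact hlam_min hμ, rfl, ?_, fun i => ?_⟩
  · rw [hθ, norm_neg]
    exact hval
  · rw [inner_neg_right, norm_neg, real_inner_comm]
    linarith [hkey i]

/-- dual characterization of the steepest descent direction. -/
theorem stmt3 {n m : ℕ} [NeZero m] (f : Fin m → E n → ℝ)
    (hf : ∀ i, ContDiff ℝ 1 (f i)) (x dsd : E n) (θ : ℝ)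
    (hmin : ∀ d : E n, maxD f x dsd + ‖dsd‖ ^ 2 / 2 ≤ maxD f x d + ‖d‖ ^ 2 / 2)
    (hθ : θ = maxD f x dsd + ‖dsd‖ ^ 2 / 2) :
    ∃ lam ∈ stdSimplex ℝ (Fin m),
      (∀ μ ∈ stdSimplex ℝ (Fin m),
        ‖∑ i, lam i • gradient (f i) x‖ ^ 2 / 2 ≤ ‖∑ i, μ i • gradient (f i) x‖ ^ 2 / 2) ∧
      dsd = -∑ i, lam i • gradient (f i) x ∧
      θ = -‖dsd‖ ^ 2 / 2 ∧
      ∀ i, ⟪gradient (f i) x, dsd⟫ ≤ -‖dsd‖ ^ 2 :=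
  stmt3_general f x dsd θ hmin hθ
end
end

section
/- Let B ∈ ℝ^{n×n} be symmetric positive definite and x ∈ ℝⁿ. There exists λ ∈ Δ_m minimizing λ ↦ ½ (Σ_{i=1}^m λ_i ∇f_i(x))ᵀ B^{-1} (Σ_{i=1}^m λ_i ∇f_i(x)) over Δ_m such that d_B(x) = −B^{-1} Σ_{i=1}^m λ_i ∇f_i(x), and moreover θ_B(x) = −½ d_B(x)ᵀ B d_B(x). -/
open RealInnerProductSpace

noncomputable section

def quad {n : ℕ} (B : Matrix (Fin n) (Fin n) ℝ) (d : E n) : ℝ :=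
  ∑ i, ∑ j, d i * B i j * d j

def mulVecE {n : ℕ} (B : Matrix (Fin n) (Fin n) ℝ) (v : E n) : E n :=
  Matrix.toEuclideanLin B v

/-!
Let `λ` minimise the dual function `μ ↦ |Σ μᵢ ∇fᵢ(x)|²_{B⁻¹}` on the compact simplex, and put
`G = Σ λᵢ ∇fᵢ(x)`, `d* = -B⁻¹G`. Since moving `λ` towards a vertex `eᵢ` cannot decrease the dual
function, `⟨∇fᵢ(x), B⁻¹G⟩ ≥ |G|²_{B⁻¹}` for every `i`, so the primal objective at `d*` is at most
`-½|G|²_{B⁻¹}`. Conversely `max_i ⟨∇fᵢ(x), d⟩ ≥ ⟨G, d⟩`, and completing the square gives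
`max_i ⟨∇fᵢ(x), d⟩ + ½ dᵀBd ≥ ½|d - d*|²_B - ½|G|²_{B⁻¹}` for every `d`. Hence any minimiser `d_B`
has `|d_B - d*|²_B ≤ 0`, i.e. `d_B = d*`, and `θ = -½|G|²_{B⁻¹} = -½ d*ᵀBd*`.
-/

open Matrix

section QuadraticForm

variable {n : ℕ} {A B : Matrix (Fin n) (Fin n) ℝ}

lemma quad_eq_inner (A : Matrix (Fin n) (Fin n) ℝ) (d : E n) : quad A d = ⟪d, mulVecE A d⟫ := by
  simp [quad, mulVecE, PiLp.inner_apply, mulVec, dotProduct, Finset.mul_sum, mul_comm,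
    mul_left_comm, mul_assoc, toLpLin_apply]

lemma quad_eq_dotProduct (A : Matrix (Fin n) (Fin n) ℝ) (d : E n) :
    quad A d = star (WithLp.ofLp d) ⬝ᵥ A *ᵥ WithLp.ofLp d := by
  simp [quad, mulVec, dotProduct, Finset.mul_sum, mul_left_comm, mul_assoc]

lemma continuous_quad (A : Matrix (Fin n) (Fin n) ℝ) : Continuous (quad A) := by
  unfold quad
  fun_prop

lemma inner_mulVecE_comm (hA : A.IsHermitian) (u v : E n) :
    ⟪mulVecE A u, v⟫ = ⟪u, mulVecE A v⟫ :=
  (isSymmetric_toEuclideanLin_iff.mpr hA) u v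

lemma mulVecE_mulVecE_inv (hB : IsUnit B) (v : E n) : mulVecE B (mulVecE B⁻¹ v) = v := by
  simp [mulVecE, toLpLin_apply, mulVec_mulVec, mul_nonsing_inv B ((isUnit_iff_isUnit_det B).mp hB)]

lemma mulVecE_add (A : Matrix (Fin n) (Fin n) ℝ) (u v : E n) :
    mulVecE A (u + v) = mulVecE A u + mulVecE A v :=
  map_add _ u v

lemma mulVecE_sub (A : Matrix (Fin n) (Fin n) ℝ) (u v : E n) :
    mulVecE A (u - v) = mulVecE A u - mulVecE A v :=
  map_sub _ u v

lemma mulVecE_smul (A : Matrix (Fin n) (Fin n) ℝ) (c : ℝ) (u : E n) :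
    mulVecE A (c • u) = c • mulVecE A u :=
  map_smul _ c u

lemma quad_add (hA : A.IsHermitian) (u v : E n) :
    quad A (u + v) = quad A u + 2 * ⟪u, mulVecE A v⟫ + quad A v := by
  have hcross : ⟪v, mulVecE A u⟫ = ⟪u, mulVecE A v⟫ := by
    rw [real_inner_comm, inner_mulVecE_comm hA]
  simp only [quad_eq_inner, mulVecE_add, inner_add_left, inner_add_right]
  linarith

lemma quad_smul (A : Matrix (Fin n) (Fin n) ℝ) (c : ℝ) (u : E n) :
    quad A (c • u) = c ^ 2 * quad A u := by
  simp only [quad_eq_inner, mulVecE_smul, real_inner_smul_left, real_inner_smul_right]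
  ring

lemma quad_zero (A : Matrix (Fin n) (Fin n) ℝ) : quad A 0 = 0 := by
  simp [quad]

lemma quad_neg (A : Matrix (Fin n) (Fin n) ℝ) (u : E n) : quad A (-u) = quad A u := by
  simpa using quad_smul A (-1) u

lemma Matrix.PosDef.quad_pos (hB : B.PosDef) {d : E n} (hd : d ≠ 0) : 0 < quad B d := by
  rw [quad_eq_dotProduct]
  exact hB.dotProduct_mulVec_pos (by simpa using hd)

lemma Matrix.PosDef.quad_add_mulVecE_inv (hB : B.PosDef) (d G : E n) :
    quad B (d + mulVecE B⁻¹ G) = quad B d + 2 * ⟪d, G⟫ + quad B⁻¹ G := by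
  rw [quad_add hB.isHermitian, mulVecE_mulVecE_inv hB.isUnit, quad_eq_inner B (mulVecE B⁻¹ G),
    mulVecE_mulVecE_inv hB.isUnit, quad_eq_inner B⁻¹ G, real_inner_comm (mulVecE B⁻¹ G) G]

end QuadraticForm

open Filter Topology Set in
lemma nonneg_of_forall_mul_add_mul_sq_nonneg {a b : ℝ}
    (h : ∀ t ∈ Ioc (0 : ℝ) 1, 0 ≤ a * t + b * t ^ 2) : 0 ≤ a := by
  have hlim : Tendsto (fun t => a + b * t) (𝓝[>] 0) (𝓝 a) := by
    refine ((by fun_prop : Continuous fun t : ℝ => a + b * t).tendsto' 0 a ?_).mono_left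
      nhdsWithin_le_nhds
    simp
  refine ge_of_tendsto hlim (eventually_of_mem (Ioc_mem_nhdsGT one_pos) fun t ht => ?_)
  have := h t ht
  have ht0 : 0 < t := ht.1
  nlinarith

section DualProblem

variable {n : ℕ} {A : Matrix (Fin n) (Fin n) ℝ} {ι : Type*} [Fintype ι]

lemma quad_le_inner_of_isMinOn_stdSimplex (hA : A.IsHermitian) (g : ι → E n) {lam : ι → ℝ}
    (hlam : lam ∈ stdSimplex ℝ ι)
    (hmin : IsMinOn (fun μ => quad A (∑ i, μ i • g i)) (stdSimplex ℝ ι) lam) (i : ι) :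
    quad A (∑ j, lam j • g j) ≤ ⟪g i, mulVecE A (∑ j, lam j • g j)⟫ := by
  classical
  set G := ∑ j, lam j • g j
  set H := g i - G
  have hsegment (t : ℝ) : ∑ j, (lam + t • (Pi.single i 1 - lam) : ι → ℝ) j • g j = G + t • H := by
    simp only [← Fintype.linearCombination_apply ℝ, map_add, map_smul, map_sub,
      Fintype.linearCombination_apply_single, one_smul, G, H]
  have hslope : ∀ t ∈ Set.Ioc (0 : ℝ) 1, 0 ≤ 2 * ⟪G, mulVecE A H⟫ * t + quad A H * t ^ 2 := by
    intro t ht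
    have hmem := (convex_stdSimplex ℝ ι).add_smul_sub_mem hlam
      (single_mem_stdSimplex ℝ i) (Set.Ioc_subset_Icc_self ht)
    have : quad A G ≤ quad A (G + t • H) := hsegment t ▸ hmin hmem
    rw [quad_add hA, quad_smul, mulVecE_smul, real_inner_smul_right] at this
    linarith
  have h := nonneg_of_forall_mul_add_mul_sq_nonneg hslope
  rw [mulVecE_sub, inner_sub_right, ← quad_eq_inner, ← inner_mulVecE_comm hA,
    real_inner_comm] at h
  linarith

end DualProblem

section MaxD

variable {n m : ℕ} [NeZero m] (f : Fin m → E n → ℝ) (x : E n)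

lemma inner_gradient_le_maxD (i : Fin m) (d : E n) : ⟪gradient (f i) x, d⟫ ≤ maxD f x d :=
  Finset.le_sup' (fun i => ⟪gradient (f i) x, d⟫) (Finset.mem_univ i)

lemma inner_sum_smul_gradient_le_maxD {lam : Fin m → ℝ} (hlam : lam ∈ stdSimplex ℝ (Fin m))
    (d : E n) : ⟪∑ i, lam i • gradient (f i) x, d⟫ ≤ maxD f x d :=
  calc ⟪∑ i, lam i • gradient (f i) x, d⟫ = ∑ i, lam i * ⟪gradient (f i) x, d⟫ := by
        simp only [sum_inner, real_inner_smul_left]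
    _ ≤ ∑ i, lam i * maxD f x d := Finset.sum_le_sum fun i _ =>
        mul_le_mul_of_nonneg_left (inner_gradient_le_maxD f x i d) (hlam.1 i)
    _ = maxD f x d := by rw [← Finset.sum_mul, hlam.2, one_mul]

end MaxD

theorem stmt4_general {n m : ℕ} [NeZero m] (f : Fin m → E n → ℝ)
    (B : Matrix (Fin n) (Fin n) ℝ) (hB : B.PosDef)
    (x dB : E n) (θ : ℝ)
    (hmin : ∀ d : E n, maxD f x dB + quad B dB / 2 ≤ maxD f x d + quad B d / 2)
    (hθ : θ = maxD f x dB + quad B dB / 2) :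
    ∃ lam ∈ stdSimplex ℝ (Fin m),
      (∀ μ ∈ stdSimplex ℝ (Fin m),
        quad B⁻¹ (∑ i, lam i • gradient (f i) x) / 2 ≤
          quad B⁻¹ (∑ i, μ i • gradient (f i) x) / 2) ∧
      dB = -(mulVecE B⁻¹ (∑ i, lam i • gradient (f i) x)) ∧
      θ = -(quad B dB) / 2 := by
  obtain ⟨lam, hlam, hdual⟩ := (isCompact_stdSimplex ℝ (Fin m)).exists_isMinOn
    (f := fun μ => quad B⁻¹ (∑ i, μ i • gradient (f i) x)) ⟨_, single_mem_stdSimplex ℝ 0⟩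
    ((continuous_quad B⁻¹).comp (by fun_prop)).continuousOn
  set G := ∑ i, lam i • gradient (f i) x
  set dStar := -mulVecE B⁻¹ G
  have hfoc := quad_le_inner_of_isMinOn_stdSimplex hB.inv.isHermitian _ hlam hdual
  have hmaxD : maxD f x dStar ≤ -quad B⁻¹ G := Finset.sup'_le _ _ fun i _ => by
    rw [inner_neg_right]
    linarith [hfoc i]
  have hquad : quad B dStar = quad B⁻¹ G := by
    simpa [dStar, quad_neg, quad_zero] using hB.quad_add_mulVecE_inv 0 G
  have hlower : ∀ d, quad B (d - dStar) / 2 - quad B⁻¹ G / 2 ≤ maxD f x d + quad B d / 2 := by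
    intro d
    rw [sub_neg_eq_add, hB.quad_add_mulVecE_inv, real_inner_comm]
    linarith [inner_sum_smul_gradient_le_maxD f x hlam d]
  have hdB : dB = dStar := by
    by_contra hne
    linarith [hB.quad_pos (sub_ne_zero.2 hne), hlower dB, hmin dStar]
  refine ⟨lam, hlam, fun μ hμ => by linarith [isMinOn_iff.mp hdual μ hμ], hdB, ?_⟩
  have hstar := hlower dStar
  rw [sub_self, quad_zero] at hstar
  rw [hθ, hdB]
  linarith

/-- dual characterization of the quasi-Newton direction d_B(x). -/
theorem stmt4 {n m : ℕ} [NeZero m] (f : Fin m → E n → ℝ)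
    (hf : ∀ i, ContDiff ℝ 1 (f i))
    (B : Matrix (Fin n) (Fin n) ℝ) (hB : B.PosDef)
    (x dB : E n) (θ : ℝ)
    (hmin : ∀ d : E n, maxD f x dB + quad B dB / 2 ≤ maxD f x d + quad B d / 2)
    (hθ : θ = maxD f x dB + quad B dB / 2) :
    ∃ lam ∈ stdSimplex ℝ (Fin m),
      (∀ μ ∈ stdSimplex ℝ (Fin m),
        quad B⁻¹ (∑ i, lam i • gradient (f i) x) / 2 ≤
          quad B⁻¹ (∑ i, μ i • gradient (f i) x) / 2) ∧
      dB = -(mulVecE B⁻¹ (∑ i, lam i • gradient (f i) x)) ∧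
      θ = -(quad B dB) / 2 :=
  stmt4_general f B hB x dB θ hmin hθ
end
end

section
/- Let U > 0 and suppose each f_i is U-strongly convex with ∇f_i Lipschitz continuous with constant L_i and bounded below by f_i^min; fix x₀ ∈ ℝⁿ. Let x, x' ∈ ℝⁿ with s := x' − x ≠ 0 and f_i(x') ≤ f_i(x) ≤ f_i(x₀) for all i, let λ ∈ Δ_m, y := Σ_{i=1}^m λ_i (∇f_i(x') − ∇f_i(x)), m̂ := max(−yᵀs/‖s‖², 0) + Σ_{i=1}^m λ_i (f_i(x) − f_i(x')), and γ := y + m̂ s. Then γᵀs/‖s‖² ≥ U, and ‖γ‖ ≤ r ‖s‖ with r := 2 max_{1≤i≤m} L_i + max_{1≤i≤m}(f_i(x₀) − f_i^min); in particular ‖γ‖²/(γᵀs) ≤ r²/U. -/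
/-!
Each `f i - (U/2)‖·‖²` is convex, so along the segment from `x` to `x'` its directional derivative
increases; this gives `U ‖s‖² ≤ ⟪∇f_i(x') - ∇f_i(x), s⟫`, and averaging over `λ` gives the same
bound for `⟪y, s⟫`. In particular `⟪y, s⟫ > 0`, so the `max` term of `m̂` vanishes and `m̂` is a
`λ`-average of the decreases `f_i(x) - f_i(x') ∈ [0, f_i(x₀) - f_i^min]`. The Lipschitz bounds
give `‖y‖ ≤ (max L_i) ‖s‖`, and the three claims follow.
-/

open RealInnerProductSpace Set Finset

noncomputable section

theorem Convex.sum_smul_mem_of_mem_stdSimplex {ι V : Type*} [Fintype ι] [AddCommGroup V]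
    [Module ℝ V] {K : Set V} (hK : Convex ℝ K) {w : ι → ℝ} (hw : w ∈ stdSimplex ℝ ι)
    {z : ι → V} (hz : ∀ i, z i ∈ K) : ∑ i, w i • z i ∈ K :=
  hK.sum_mem (fun i _ => hw.1 i) hw.2 fun i _ => hz i

theorem ConvexOn.hasFDerivAt_apply_sub_le {V : Type*} [NormedAddCommGroup V] [NormedSpace ℝ V]
    {h : V → ℝ} (hh : ConvexOn ℝ univ h) {x x' : V} {φ φ' : V →L[ℝ] ℝ}
    (hx : HasFDerivAt h φ x) (hx' : HasFDerivAt h φ' x') : φ (x' - x) ≤ φ' (x' - x) := by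
  let ℓ : ℝ →ᵃ[ℝ] V := AffineMap.lineMap x x'
  have hline : ConvexOn ℝ univ (h ∘ ℓ) := by simpa using hh.comp_affineMap ℓ
  have hderiv : ∀ {t : ℝ} {ψ : V →L[ℝ] ℝ}, HasFDerivAt h ψ (ℓ t) →
      HasDerivAt (h ∘ ℓ) (ψ (x' - x)) t :=
    fun hψ => hψ.comp_hasDerivAt _ AffineMap.hasDerivAt_lineMap
  have h0 := hline.le_slope_of_hasDerivAt (mem_univ 0) (mem_univ 1) one_pos
    (hderiv (by simpa [ℓ] using hx))
  have h1 := hline.slope_le_of_hasDerivAt (mem_univ 0) (mem_univ 1) one_pos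
    (hderiv (by simpa [ℓ] using hx'))
  exact h0.trans h1

theorem StrongConvexOn.mul_norm_sub_sq_le_inner_gradient_sub {F : Type*}
    [NormedAddCommGroup F] [InnerProductSpace ℝ F] [CompleteSpace F] {f : F → ℝ} {m : ℝ}
    (hf : StrongConvexOn univ m f) {x x' : F} (hx : DifferentiableAt ℝ f x)
    (hx' : DifferentiableAt ℝ f x') :
    m * ‖x' - x‖ ^ 2 ≤ ⟪gradient f x' - gradient f x, x' - x⟫ := by
  have hderiv : ∀ {z : F}, DifferentiableAt ℝ f z → HasFDerivAt (fun z => f z - m / 2 * ‖z‖ ^ 2)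
      (fderiv ℝ f z - (m / 2) • (2 • innerSL ℝ z)) z :=
    fun hz => hz.hasFDerivAt.sub ((hasStrictFDerivAt_norm_sq _).hasFDerivAt.const_mul (m / 2))
  have key := (strongConvexOn_iff_convex.1 hf).hasFDerivAt_apply_sub_le (hderiv hx) (hderiv hx')
  simp only [sub_apply, smul_apply, innerSL_apply_apply,
    ← inner_gradient_left, smul_eq_mul, nsmul_eq_mul] at key
  rw [← real_inner_self_eq_norm_sq, inner_sub_left, inner_sub_left]
  linarith

theorem norm_sq_div_inner_le_sq_div {F : Type*} [NormedAddCommGroup F] [InnerProductSpace ℝ F]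
    {γ s : F} {U r : ℝ} (hU : 0 < U) (hs : s ≠ 0) (hγs : U * ‖s‖ ^ 2 ≤ ⟪γ, s⟫)
    (hγ : ‖γ‖ ≤ r * ‖s‖) : ‖γ‖ ^ 2 / ⟪γ, s⟫ ≤ r ^ 2 / U := by
  calc ‖γ‖ ^ 2 / ⟪γ, s⟫ ≤ (r * ‖s‖) ^ 2 / (U * ‖s‖ ^ 2) :=
        div_le_div₀ (by positivity) (pow_le_pow_left₀ (norm_nonneg γ) hγ 2) (by positivity) hγs
    _ = r ^ 2 / U := by field_simp

theorem le_inner_add_smul_of_le_inner {F : Type*} [NormedAddCommGroup F] [InnerProductSpace ℝ F]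
    {y s : F} {c μ : ℝ} (hys : c ≤ ⟪y, s⟫) (hμ : 0 ≤ μ) : c ≤ ⟪y + μ • s, s⟫ := by
  rw [inner_add_left, real_inner_smul_left]
  linarith [mul_nonneg hμ (real_inner_self_nonneg (x := s))]

theorem norm_add_smul_le_of_le {F : Type*} [NormedAddCommGroup F] [NormedSpace ℝ F]
    {y s : F} {A B μ : ℝ} (hy : ‖y‖ ≤ A * ‖s‖) (hμ : μ ∈ Icc 0 B) :
    ‖y + μ • s‖ ≤ (A + B) * ‖s‖ :=
  calc ‖y + μ • s‖ ≤ ‖y‖ + μ * ‖s‖ := by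
        refine (norm_add_le _ _).trans_eq ?_
        rw [norm_smul, Real.norm_eq_abs, abs_of_nonneg hμ.1]
    _ ≤ (A + B) * ‖s‖ := by nlinarith [norm_nonneg s, hμ.2]

/-- curvature bounds for γ under strong convexity. -/
theorem stmt17 {n m : ℕ} [NeZero m] (f : Fin m → E n → ℝ)
    (hf : ∀ i, ContDiff ℝ 1 (f i))
    (U : ℝ) (hU : 0 < U)
    (hsc : ∀ i, ConvexOn ℝ Set.univ (fun z : E n => f i z - U / 2 * ‖z‖ ^ 2))
    (L : Fin m → NNReal) (hL : ∀ i, LipschitzWith (L i) (fun z => gradient (f i) z))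
    (fmin : Fin m → ℝ) (hfmin : ∀ i, ∀ z : E n, fmin i ≤ f i z)
    (x₀ x x' s : E n) (hs : s = x' - x) (hs0 : s ≠ 0)
    (hmono : ∀ i, f i x' ≤ f i x) (hmono0 : ∀ i, f i x ≤ f i x₀)
    (lam : Fin m → ℝ) (hlam : lam ∈ stdSimplex ℝ (Fin m))
    (y : E n) (hy : y = ∑ i, lam i • (gradient (f i) x' - gradient (f i) x))
    (mh : ℝ) (hmh : mh = max (-(⟪y, s⟫ / ‖s‖ ^ 2)) 0 + ∑ i, lam i * (f i x - f i x'))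
    (γ : E n) (hγ : γ = y + mh • s)
    (r : ℝ)
    (hr : r = 2 * (Finset.univ.sup' Finset.univ_nonempty fun i => (L i : ℝ)) +
      Finset.univ.sup' Finset.univ_nonempty fun i => f i x₀ - fmin i) :
    U ≤ ⟪γ, s⟫ / ‖s‖ ^ 2 ∧ ‖γ‖ ≤ r * ‖s‖ ∧ ‖γ‖ ^ 2 / ⟪γ, s⟫ ≤ r ^ 2 / U := by
  set Lmax := Finset.univ.sup' Finset.univ_nonempty fun i => (L i : ℝ)
  set Fmax := Finset.univ.sup' Finset.univ_nonempty fun i => f i x₀ - fmin i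
  have hgrad : ∀ i, U * ‖s‖ ^ 2 ≤ ⟪gradient (f i) x' - gradient (f i) x, s⟫ := fun i => by
    have hdiff := (hf i).differentiable one_ne_zero
    simpa [hs] using (strongConvexOn_iff_convex.2 (hsc i)).mul_norm_sub_sq_le_inner_gradient_sub
      (hdiff x) (hdiff x')
  have hys : U * ‖s‖ ^ 2 ≤ ⟪y, s⟫ := by
    simp only [hy, sum_inner, real_inner_smul_left]
    exact (convex_Ici _).sum_smul_mem_of_mem_stdSimplex hlam fun i => mem_Ici.2 (hgrad i)
  have hyn : ‖y‖ ≤ Lmax * ‖s‖ := by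
    rw [hy, ← mem_closedBall_zero_iff]
    refine (convex_closedBall _ _).sum_smul_mem_of_mem_stdSimplex hlam fun i => ?_
    rw [mem_closedBall_zero_iff, ← dist_eq_norm, hs, ← dist_eq_norm]
    exact ((hL i).dist_le_mul x' x).trans
      (by gcongr; exact le_sup' (fun i => (L i : ℝ)) (mem_univ i))
  have hmh_mem : mh ∈ Icc 0 Fmax := by
    have hys0 : 0 ≤ ⟪y, s⟫ := (by positivity : 0 ≤ U * ‖s‖ ^ 2).trans hys
    rw [hmh, max_eq_right (neg_nonpos.2 (div_nonneg hys0 (by positivity))), zero_add]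
    exact (convex_Icc _ _).sum_smul_mem_of_mem_stdSimplex hlam fun i =>
      ⟨sub_nonneg.2 (hmono i), (sub_le_sub (hmono0 i) (hfmin i x')).trans
        (le_sup' (fun i => f i x₀ - fmin i) (mem_univ i))⟩
  have hγs : U * ‖s‖ ^ 2 ≤ ⟪γ, s⟫ := hγ ▸ le_inner_add_smul_of_le_inner hys hmh_mem.1
  have hγn : ‖γ‖ ≤ r * ‖s‖ := by
    have hLmax : 0 ≤ Lmax := le_sup'_of_le _ (mem_univ 0) (L 0).coe_nonneg
    refine hγ ▸ (norm_add_smul_le_of_le hyn hmh_mem).trans ?_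
    rw [hr]
    gcongr
    linarith
  exact ⟨(le_div_iff₀ (by positivity)).2 hγs, hγn, norm_sq_div_inner_le_sq_div hU hs0 hγs hγn⟩
end
end
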